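/- arXiv:1405.0096 — 2 statements merged into one kernel-verified Lean document; each statement's English description precedes it below -/
import Mathlib

section
/- Let H_u and H_v be two disjoint graphs of order m such that H_u − u and H_v − v are both r_1-regular, where m ≥ 2 and r_1 ≥ 1. If H_u and H_v have the same adjacency spectrum (are A-cospectral), then the pocket graphs G[F,V_k,H_u] and G[F,V_k,H_v] are A-cospectral. -/
open Matrix BigOperators
open scoped Classical

/-- The adjacency matrix of a simple graph, with entries in `R`. -/
noncomputable def adjMat (R : Type*) [Zero R] [One R] {V : Type*} [Fintype V]
    (G : SimpleGraph V) : Matrix V V R :=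
  Matrix.of fun x y => if G.Adj x y then (1 : R) else 0

/-- The degree of a vertex. -/
noncomputable def gdeg {V : Type*} [Fintype V] (G : SimpleGraph V) (x : V) : ℕ :=
  (Finset.univ.filter fun y => G.Adj x y).card

/-- `G` is `r`-regular. -/
def IsReg {V : Type*} [Fintype V] (G : SimpleGraph V) (r : ℕ) : Prop :=
  ∀ x, gdeg G x = r

/-- The signless Laplacian matrix `Q(G) = D(G) + A(G)`. -/
noncomputable def qMat (R : Type*) [AddMonoidWithOne R] {V : Type*} [Fintype V]
    (G : SimpleGraph V) : Matrix V V R :=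
  Matrix.diagonal (fun x => (gdeg G x : R)) + adjMat R G

/-- The adjacency spectrum, as the multiset of real roots (with multiplicity) of the
characteristic polynomial of the (real symmetric) adjacency matrix. -/
noncomputable def aSpec {V : Type*} [Fintype V] (G : SimpleGraph V) : Multiset ℝ :=
  (adjMat ℝ G).charpoly.roots

/-- The signless Laplacian spectrum. -/
noncomputable def qSpec {V : Type*} [Fintype V] (G : SimpleGraph V) : Multiset ℝ :=
  (qMat ℝ G).charpoly.roots

/-- The `M`-coronal `Γ_M(x) = 1ᵀ (xI − M)⁻¹ 1`, the sum of the entries of `(xI − M)⁻¹`. -/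
noncomputable def coronal {n R : Type*} [Fintype n] [DecidableEq n] [Field R]
    (M : Matrix n n R) (x : R) : R :=
  ∑ i, ∑ j, ((x • (1 : Matrix n n R) - M)⁻¹) i j

/-- Embeds a `P × P` matrix as a `V × V` matrix supported on the image of `g`, zero elsewhere.
If the vertices of `V` are ordered listing the image of `g` first, this is `diag(M, 0)`. -/
noncomputable def embedMatrix {P V R : Type*} [Fintype P] [AddCommMonoid R]
    (g : P → V) (M : Matrix P P R) : Matrix V V R :=
  Matrix.of fun x y => ∑ px : P, ∑ py : P, if x = g px ∧ y = g py then M px py else 0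

/-- The graph `H − v` obtained by deleting the vertex `v`. -/
def delVert {W : Type*} (H : SimpleGraph W) (v : W) : SimpleGraph {w : W // w ≠ v} :=
  H.comap Subtype.val

/-- The graph `H − {u,v}` obtained by deleting the two vertices `u, v`. -/
def delVert2 {W : Type*} (H : SimpleGraph W) (u v : W) :
    SimpleGraph {w : W // w ≠ u ∧ w ≠ v} :=
  H.comap Subtype.val

/-- The join `G₁ ∨ G₂` of two vertex-disjoint graphs: their disjoint union together with all
edges between the two parts. -/
def sgJoin {α β : Type*} (G₁ : SimpleGraph α) (G₂ : SimpleGraph β) : SimpleGraph (α ⊕ β) where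
  Adj x y :=
    match x, y with
    | Sum.inl a, Sum.inl b => G₁.Adj a b
    | Sum.inl _, Sum.inr _ => True
    | Sum.inr _, Sum.inl _ => True
    | Sum.inr a, Sum.inr b => G₂.Adj a b
  symm := by
    constructor
    rintro (a | a) (b | b) h
    · exact G₁.adj_symm h
    · trivial
    · trivial
    · exact G₂.adj_symm h
  loopless := by
    constructor
    rintro (a | a) h
    · exact G₁.loopless.irrefl a h
    · exact G₂.loopless.irrefl a h

/-- The graph `G[F, V_k, H_v]` with `k` pockets: take one copy of `F` and `k` disjoint copies
of `H` (with specified vertex `v`), identifying the vertex `v` of the `i`-th copy with the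
vertex `f i` of `F`.  The `i`-th copy of `H − v` is carried by `{i} × {w // w ≠ v}`. -/
def pocketGraph {V W : Type*} (F : SimpleGraph V) (H : SimpleGraph W) (v : W)
    {k : ℕ} (f : Fin k ↪ V) : SimpleGraph (V ⊕ (Fin k × {w : W // w ≠ v})) where
  Adj x y :=
    match x, y with
    | Sum.inl a, Sum.inl b => F.Adj a b
    | Sum.inl a, Sum.inr (i, w) => a = f i ∧ H.Adj v w.1
    | Sum.inr (i, w), Sum.inl a => a = f i ∧ H.Adj v w.1
    | Sum.inr (i, w), Sum.inr (j, w') => i = j ∧ H.Adj w.1 w'.1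
  symm := by
    constructor
    rintro (a | ⟨i, w⟩) (b | ⟨j, w'⟩) h
    · exact F.adj_symm h
    · exact h
    · exact h
    · exact ⟨h.1.symm, H.adj_symm h.2⟩
  loopless := by
    constructor
    rintro (a | ⟨i, w⟩) h
    · exact F.loopless.irrefl a h
    · exact H.loopless.irrefl _ h.2

/-- The graph `G[F, E_k, H_{uv}]` with `k` edge-pockets: take one copy of `F` and `k` disjoint
copies of `H` (with specified edge `uv`), pasting the edge `uv` of the `i`-th copy onto the
edge `e_i = (a i)(b i)` of `F` (identifying `u` with `a i` and `v` with `b i`).  The `i`-th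
copy of `H − {u,v}` is carried by `{i} × {w // w ≠ u ∧ w ≠ v}`. -/
def edgePocketGraph {V W : Type*} (F : SimpleGraph V) (H : SimpleGraph W) (u v : W)
    {k : ℕ} (a b : Fin k → V) :
    SimpleGraph (V ⊕ (Fin k × {w : W // w ≠ u ∧ w ≠ v})) where
  Adj x y :=
    match x, y with
    | Sum.inl s, Sum.inl t => F.Adj s t
    | Sum.inl s, Sum.inr (i, w) => (s = a i ∧ H.Adj u w.1) ∨ (s = b i ∧ H.Adj v w.1)
    | Sum.inr (i, w), Sum.inl s => (s = a i ∧ H.Adj u w.1) ∨ (s = b i ∧ H.Adj v w.1)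
    | Sum.inr (i, w), Sum.inr (j, w') => i = j ∧ H.Adj w.1 w'.1
  symm := by
    constructor
    rintro (s | ⟨i, w⟩) (t | ⟨j, w'⟩) h
    · exact F.adj_symm h
    · exact h
    · exact h
    · exact ⟨h.1.symm, H.adj_symm h.2⟩
  loopless := by
    constructor
    rintro (s | ⟨i, w⟩) h
    · exact F.loopless.irrefl s h
    · exact H.loopless.irrefl _ h.2


/-!
Both `H` and the pocket graph are expanded by a Schur complement against the `H - v` blocks. Writing
`φ` for the characteristic polynomial and `Γ(x) = 1ᵀ (xI - A(H - v))⁻¹ 1` for the coronal of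
`H - v`, a vertex `v` adjacent to all other vertices gives
`φ(H, x) = φ(H - v, x) (x - Γ(x))` and
`φ(G[F, V_k, H_v], x) = φ(H - v, x)^k det(xI - A(F) - Γ(x) diag(I_k, 0))`.
If `H - v` is `r`-regular on `m - 1` vertices then `Γ(x) = (m - 1) / (x - r)`, so the first
identity shows that `φ(H)` determines `φ(H - v)`, and the second one that `φ(H - v)` determines
the characteristic polynomial of the pocket graph. Both identities hold for all but finitely
many `x`, which suffices for polynomials over `ℝ`.
-/

open Polynomial Filter

theorem Polynomial.eventually_cofinite_eval_ne_zero {R : Type*} [CommRing R] [IsDomain R]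
    {p : R[X]} (hp : p ≠ 0) : ∀ᶠ x in cofinite, p.eval x ≠ 0 :=
  eventually_cofinite.2 <| by simpa using finite_setOfPred_isRoot hp

theorem Polynomial.eq_of_eventually_cofinite_eval_eq {R : Type*} [CommRing R] [IsDomain R]
    [Infinite R] {p q : R[X]} (h : ∀ᶠ x in cofinite, p.eval x = q.eval x) : p = q :=
  eq_of_infinite_eval_eq p q (frequently_cofinite_iff_infinite.1 h.frequently)

theorem Matrix.IsHermitian.charpoly_eq_of_roots_eq {𝕜 m n : Type*} [RCLike 𝕜] [Fintype m]
    [DecidableEq m] [Fintype n] [DecidableEq n] {A : Matrix m m 𝕜} {B : Matrix n n 𝕜}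
    (hA : A.IsHermitian) (hB : B.IsHermitian) (h : A.charpoly.roots = B.charpoly.roots) :
    A.charpoly = B.charpoly := by
  rw [hA.splits_charpoly.eq_prod_roots_of_monic (charpoly_monic A),
    hB.splits_charpoly.eq_prod_roots_of_monic (charpoly_monic B), h]

theorem adjMat_isHermitian {V : Type*} [Fintype V] (G : SimpleGraph V) :
    (adjMat ℝ G).IsHermitian := by
  ext i j
  simp [adjMat, SimpleGraph.adj_comm]

theorem aSpec_eq_roots_charpoly {V : Type*} [Fintype V] [DecidableEq V] (G : SimpleGraph V) :
    aSpec G = (adjMat ℝ G).charpoly.roots := by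
  unfold aSpec
  congr!

section Field

variable {R : Type*} [Field R]

theorem Matrix.eval_charpoly_eq_det {n : Type*} [Fintype n] [DecidableEq n] (M : Matrix n n R)
    (x : R) : M.charpoly.eval x = (x • (1 : Matrix n n R) - M).det := by
  rw [eval_charpoly, scalar_apply, smul_one_eq_diagonal]

theorem Matrix.card_eq_of_charpoly_eq {m n : Type*} [Fintype m] [DecidableEq m] [Fintype n]
    [DecidableEq n] {A : Matrix m m R} {B : Matrix n n R} (h : A.charpoly = B.charpoly) :
    Fintype.card m = Fintype.card n := by
  simpa using congrArg natDegree h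

theorem coronal_eq_card_div {n : Type*} [Fintype n] [DecidableEq n] {M : Matrix n n R} {r : R}
    (hM : M *ᵥ 1 = r • 1) {x : R} (hx : M.charpoly.eval x ≠ 0) :
    coronal M x = Fintype.card n / (x - r) := by
  rw [eval_charpoly_eq_det] at hx
  set N := x • (1 : Matrix n n R) - M
  have hinv : (x - r) • (N⁻¹ *ᵥ 1) = 1 := by
    have hN : N *ᵥ 1 = (x - r) • 1 := by
      simp only [N, sub_mulVec, smul_mulVec, one_mulVec, hM, sub_smul]
    rw [← mulVec_smul, ← hN, mulVec_mulVec, nonsing_inv_mul _ (isUnit_iff_ne_zero.2 hx),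
      one_mulVec]
  rcases eq_or_ne (x - r) 0 with hxr | hxr
  · have : IsEmpty n := ⟨fun i => by simpa [hxr] using congrFun hinv i⟩
    simp [coronal, hxr]
  · have hcoronal : coronal M x = ∑ i, (N⁻¹ *ᵥ 1) i := by
      simp [coronal, N, mulVec, dotProduct]
    rw [eq_div_iff hxr, hcoronal, mul_comm, Finset.mul_sum]
    simpa using congrArg (fun w => ∑ i, w i) hinv

theorem adjMat_mulVec_one_of_isReg {V : Type*} [Fintype V] {G : SimpleGraph V} {r : ℕ}
    (hG : IsReg G r) :
    adjMat R G *ᵥ 1 = (r : R) • 1 := by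
  ext x
  simp [adjMat, mulVec, dotProduct, ← hG x, gdeg]

theorem embedMatrix_one_apply {P V : Type*} [Fintype P] [DecidableEq P] (g : P → V) (a b : V) :
    embedMatrix g (1 : Matrix P P R) a b = ∑ p, if a = g p ∧ b = g p then 1 else 0 := by
  refine Finset.sum_congr rfl fun p _ => ?_
  rw [Finset.sum_eq_single p (fun q _ hqp => by simp [Ne.symm hqp]) (by simp)]
  simp

theorem eval_charpoly_adjMat_of_forall_adj {W : Type*} [Fintype W] [DecidableEq W]
    {H : SimpleGraph W} {v : W} (hv : ∀ w, w ≠ v → H.Adj v w) {x : R}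
    (hx : (adjMat R (delVert H v)).charpoly.eval x ≠ 0) :
    (adjMat R H).charpoly.eval x =
      (adjMat R (delVert H v)).charpoly.eval x * (x - coronal (adjMat R (delVert H v)) x) := by
  set N := x • (1 : Matrix _ _ R) - adjMat R (delVert H v)
  simp only [eval_charpoly_eq_det] at hx ⊢
  have : Invertible N := N.invertibleOfIsUnitDet (isUnit_iff_ne_zero.2 hx)
  have : Unique {w // w = v} := ⟨⟨⟨v, rfl⟩⟩, fun a => Subtype.ext a.2⟩
  have hblocks : (x • (1 : Matrix W W R) - adjMat R H).submatrix (Equiv.sumCompl (· = v))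
      (Equiv.sumCompl (· = v)) =
        fromBlocks (of fun _ _ => x) (of fun _ _ => -1) (of fun _ _ => -1) N := by
    ext (⟨i, hi⟩ | ⟨i, hi⟩) (⟨j, hj⟩ | ⟨j, hj⟩)
    · simp [adjMat, hi, hj]
    · simp [adjMat, hi, hv j hj, Ne.symm hj]
    · simp [adjMat, hj, H.adj_symm (hv i hi), hi]
    · simp [N, adjMat, delVert, one_apply]
  rw [← det_submatrix_equiv_self (Equiv.sumCompl (· = v)), hblocks, det_fromBlocks₂₂]
  congr 1
  rw [det_unique]
  simp [mul_apply, coronal, N, Finset.sum_comm (γ := {w // w ≠ v})]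

open scoped Kronecker in
theorem eval_charpoly_adjMat_pocketGraph {V W : Type*} [Fintype V] [DecidableEq V] [Fintype W]
    [DecidableEq W] (F : SimpleGraph V) {H : SimpleGraph W} {v : W}
    (hv : ∀ w, w ≠ v → H.Adj v w) {k : ℕ} (f : Fin k ↪ V) {x : R}
    (hx : (adjMat R (delVert H v)).charpoly.eval x ≠ 0) :
    (adjMat R (pocketGraph F H v f)).charpoly.eval x =
      (adjMat R (delVert H v)).charpoly.eval x ^ k *
        (x • (1 : Matrix V V R) - adjMat R F -
          coronal (adjMat R (delVert H v)) x • embedMatrix f 1).det := by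
  set N := x • (1 : Matrix _ _ R) - adjMat R (delVert H v)
  simp only [eval_charpoly_eq_det] at hx ⊢
  set D := (1 : Matrix (Fin k) (Fin k) R) ⊗ₖ N
  have hD : D.det = N.det ^ k := by simp [D, det_kronecker]
  have : Invertible D := D.invertibleOfIsUnitDet (hD ▸ (isUnit_iff_ne_zero.2 hx).pow k)
  set B : Matrix V (Fin k × {w // w ≠ v}) R := of fun a p => if a = f p.1 then -1 else 0
  have hblocks : x • (1 : Matrix _ _ R) - adjMat R (pocketGraph F H v f) =
      fromBlocks (x • 1 - adjMat R F) B Bᵀ D := by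
    ext (a | ⟨i, w⟩) (b | ⟨j, w'⟩)
    · simp [adjMat, pocketGraph, one_apply]
      -- the two sides differ only in their classical `Decidable` instances
      rfl
    · simp [adjMat, pocketGraph, B, hv _ w'.2, apply_ite]
    · simp [adjMat, pocketGraph, B, hv _ w.2, apply_ite]
    · by_cases hij : i = j <;> simp [adjMat, pocketGraph, D, N, delVert, one_apply, hij]
  have hschur : B * ⅟D * Bᵀ = coronal (adjMat R (delVert H v)) x • embedMatrix f 1 := by
    ext a b
    simp [invOf_eq_nonsing_inv, D, inv_kronecker, B, mul_apply, embedMatrix_one_apply,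
      coronal, N, Fintype.sum_prod_type, one_apply, ite_and, Finset.mul_sum, mul_ite, ite_mul]
    refine Finset.sum_congr rfl fun i _ => ?_
    rw [Finset.sum_comm]
    split_ifs <;> simp
  rw [hblocks, det_fromBlocks₂₂, hD, hschur]

theorem charpoly_adjMat_mul_of_isReg_delVert [Infinite R] {W : Type*} [Fintype W]
    [DecidableEq W] {H : SimpleGraph W} {v : W} (hv : ∀ w, w ≠ v → H.Adj v w) {r : ℕ}
    (hreg : IsReg (delVert H v) r) :
    (adjMat R H).charpoly * (X - C (r : R)) = (adjMat R (delVert H v)).charpoly *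
      (X * (X - C (r : R)) - C (Fintype.card {w // w ≠ v} : R)) := by
  refine eq_of_eventually_cofinite_eval_eq ?_
  filter_upwards [eventually_cofinite_ne (r : R),
    eventually_cofinite_eval_ne_zero (adjMat R (delVert H v)).charpoly_monic.ne_zero]
    with x hxr hx
  simp only [eval_mul, eval_sub, eval_X, eval_C]
  rw [eval_charpoly_adjMat_of_forall_adj hv hx,
    coronal_eq_card_div (adjMat_mulVec_one_of_isReg hreg) hx]
  field_simp [sub_ne_zero.2 hxr]

theorem charpoly_adjMat_delVert_eq_of_charpoly_eq [Infinite R] {W₁ W₂ : Type*} [Fintype W₁]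
    [DecidableEq W₁] [Fintype W₂] [DecidableEq W₂] {H₁ : SimpleGraph W₁} {H₂ : SimpleGraph W₂}
    {v₁ : W₁} {v₂ : W₂} (hv₁ : ∀ w, w ≠ v₁ → H₁.Adj v₁ w) (hv₂ : ∀ w, w ≠ v₂ → H₂.Adj v₂ w)
    {r : ℕ} (hreg₁ : IsReg (delVert H₁ v₁) r) (hreg₂ : IsReg (delVert H₂ v₂) r)
    (h : (adjMat R H₁).charpoly = (adjMat R H₂).charpoly) :
    (adjMat R (delVert H₁ v₁)).charpoly = (adjMat R (delVert H₂ v₂)).charpoly := by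
  have hcard : Fintype.card {w // w ≠ v₁} = Fintype.card {w // w ≠ v₂} := by
    simp [Fintype.card_subtype_compl, card_eq_of_charpoly_eq h]
  have hq : X * (X - C (r : R)) - C (Fintype.card {w // w ≠ v₂} : R) ≠ 0 :=
    Monic.ne_zero (by monicity!)
  apply mul_right_cancel₀ hq
  rw [← hcard, ← charpoly_adjMat_mul_of_isReg_delVert hv₁ hreg₁, hcard,
    ← charpoly_adjMat_mul_of_isReg_delVert hv₂ hreg₂, h]

end Field

theorem adj_cospectral_pocketGraph_general
    {V W₁ W₂ : Type*} [Fintype V] [Fintype W₁] [DecidableEq W₁]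
    [Fintype W₂] [DecidableEq W₂]
    (k r₁ : ℕ)
    (F : SimpleGraph V) (Hu : SimpleGraph W₁) (Hv : SimpleGraph W₂) (u : W₁) (v : W₂)
    (hdegu : ∀ w : W₁, w ≠ u → Hu.Adj u w) (hdegv : ∀ w : W₂, w ≠ v → Hv.Adj v w)
    (hregu : IsReg (delVert Hu u) r₁) (hregv : IsReg (delVert Hv v) r₁)
    (f : Fin k ↪ V)
    (hcos : aSpec Hu = aSpec Hv) :
    aSpec (pocketGraph F Hu u f) = aSpec (pocketGraph F Hv v f) := by
  rw [aSpec_eq_roots_charpoly, aSpec_eq_roots_charpoly] at hcos ⊢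
  have hdel := charpoly_adjMat_delVert_eq_of_charpoly_eq hdegu hdegv hregu hregv
    ((adjMat_isHermitian Hu).charpoly_eq_of_roots_eq (adjMat_isHermitian Hv) hcos)
  have hcard := card_eq_of_charpoly_eq hdel
  congr 1
  refine eq_of_eventually_cofinite_eval_eq ?_
  filter_upwards [eventually_cofinite_eval_ne_zero
    (adjMat ℝ (delVert Hu u)).charpoly_monic.ne_zero] with x hx
  rw [eval_charpoly_adjMat_pocketGraph F hdegu f hx,
    eval_charpoly_adjMat_pocketGraph F hdegv f (hdel ▸ hx),
    coronal_eq_card_div (adjMat_mulVec_one_of_isReg hregu) hx,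
    coronal_eq_card_div (adjMat_mulVec_one_of_isReg hregv) (hdel ▸ hx), hdel, hcard]

/-- Corollary 3.3. -/
theorem adj_cospectral_pocketGraph
    {V W₁ W₂ : Type*} [Fintype V] [DecidableEq V] [Fintype W₁] [DecidableEq W₁]
    [Fintype W₂] [DecidableEq W₂]
    (m k r₁ : ℕ) (hmu : Fintype.card W₁ = m) (hmv : Fintype.card W₂ = m)
    (hm2 : 2 ≤ m) (hr₁ : 1 ≤ r₁)
    (F : SimpleGraph V) (Hu : SimpleGraph W₁) (Hv : SimpleGraph W₂) (u : W₁) (v : W₂)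
    (hdegu : ∀ w : W₁, w ≠ u → Hu.Adj u w) (hdegv : ∀ w : W₂, w ≠ v → Hv.Adj v w)
    (hregu : IsReg (delVert Hu u) r₁) (hregv : IsReg (delVert Hv v) r₁)
    (f : Fin k ↪ V)
    (hcos : aSpec Hu = aSpec Hv) :
    aSpec (pocketGraph F Hu u f) = aSpec (pocketGraph F Hv v f) :=
  adj_cospectral_pocketGraph_general k r₁ F Hu Hv u v hdegu hdegv hregu hregv f hcos
end

section
/- Let H_u and H_v be two disjoint graphs of order m such that H_u − u and H_v − v are both r_1-regular, where m ≥ 2 and r_1 ≥ 1. If H_u and H_v have the same signless Laplacian spectrum (are Q-cospectral), then the pocket graphs G[F,V_k,H_u] and G[F,V_k,H_v] are Q-cospectral. -/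
open Matrix BigOperators
open scoped Classical

/-! Let `N` be the principal submatrix of `Q(H)` on `H − u`. If `u` is adjacent to every other
vertex and `H − u` is `r₁`-regular, every row of `N` sums to `c = 2r₁ + 1`. So in `Q(H)` and in
`Q(G[F, V_k, H_u])` the blocks joining the copies of `H − u` to the rest consist of
`c`-eigenvectors of `N`, and a Schur-complement step that needs no inverses gives
  `χ(Q(H)) (X − c) = ((X − c)(X − (m − 1)) − (m − 1)) χ(N)` and
  `χ(Q(G[F, V_k, H_u])) (X − c)^|V| = Ψ(F, f, m − 1, c) χ(N)^k`.
If `H_u` and `H_v` are Q-cospectral, the first identity gives `χ(N_u) = χ(N_v)`. The second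
identity then gives equal characteristic polynomials for the two pocket graphs. -/

open Polynomial
open scoped Kronecker

namespace Matrix

variable {R : Type*} [CommRing R] {α β : Type*} [Fintype α] [DecidableEq α]
  [Fintype β] [DecidableEq β]

theorem det_fromBlocks_mul_pow_card_of_mul_eq_smul (A : Matrix α α R) (B : Matrix α β R)
    (C : Matrix β α R) (D : Matrix β β R) {t : R} (h : D * C = t • C) :
    (fromBlocks A B C D).det * t ^ Fintype.card α = (t • A - B * C).det * D.det := by
  have key : fromBlocks A B C D * fromBlocks (t • 1) 0 (-C) 1 =
      fromBlocks (t • A - B * C) B 0 D := by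
    simp [fromBlocks_multiply, h, sub_eq_add_neg]
  have := congrArg det key
  rwa [det_mul, det_fromBlocks_zero₁₂, det_fromBlocks_zero₂₁, det_smul, det_one, det_one,
    mul_one, mul_one, Fintype.card] at this

theorem charpoly_fromBlocks_mul_pow_card_of_mul_eq_smul (A : Matrix α α R) (B : Matrix α β R)
    (C : Matrix β α R) (D : Matrix β β R) {c : R} (h : D * C = c • C) :
    (fromBlocks A B C D).charpoly * (X - Polynomial.C c) ^ Fintype.card α =
      ((X - Polynomial.C c) • A.charmatrix - (B * C).map Polynomial.C).det * D.charpoly := by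
  have h' : D.charmatrix * -C.map Polynomial.C = (X - Polynomial.C c) • -C.map Polynomial.C := by
    rw [Matrix.mul_neg, charmatrix, Matrix.sub_mul, RingHom.mapMatrix_apply, ← Matrix.map_mul, h]
    ext i j
    simp [sub_mul]
  rw [charpoly, charmatrix_fromBlocks, det_fromBlocks_mul_pow_card_of_mul_eq_smul _ _ _ _ h',
    Matrix.neg_mul, Matrix.mul_neg, neg_neg, ← Matrix.map_mul, charpoly]

theorem charpoly_one_kronecker {κ : Type*} [Fintype κ] [DecidableEq κ] (N : Matrix β β R) :
    ((1 : Matrix κ κ R) ⊗ₖ N).charpoly = N.charpoly ^ Fintype.card κ := by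
  have : ((1 : Matrix κ κ R) ⊗ₖ N).charmatrix = (1 : Matrix κ κ R[X]) ⊗ₖ N.charmatrix := by
    ext ⟨i, b⟩ ⟨j, b'⟩ : 1
    by_cases hi : i = j <;> by_cases hb : b = b' <;> simp [hi, hb]
  rw [charpoly, this, det_kronecker, det_one, one_pow, one_mul, charpoly]

theorem IsHermitian.charpoly_eq_of_roots_eq_s6 {𝕜 n n' : Type*} [RCLike 𝕜] [Fintype n]
    [DecidableEq n] [Fintype n'] [DecidableEq n'] {A : Matrix n n 𝕜} {B : Matrix n' n' 𝕜}
    (hA : A.IsHermitian) (hB : B.IsHermitian) (h : A.charpoly.roots = B.charpoly.roots) :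
    A.charpoly = B.charpoly := by
  rw [hA.splits_charpoly.eq_prod_roots_of_monic A.charpoly_monic,
    hB.splits_charpoly.eq_prod_roots_of_monic B.charpoly_monic, h]

end Matrix

section SignlessLaplacian

variable {V : Type*} [Fintype V]

theorem gdeg_eq_sum_adjMat (G : SimpleGraph V) (x : V) :
    (gdeg G x : ℝ) = ∑ y, adjMat ℝ G x y := by
  rw [gdeg, adjMat, ← Finset.sum_boole]
  rfl

theorem qMat_isHermitian [DecidableEq V] (G : SimpleGraph V) : (qMat ℝ G).IsHermitian := by
  ext x y
  by_cases h : x = y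
  · subst h; rfl
  · simp [qMat, adjMat, h, Ne.symm h, G.adj_comm]

theorem qSpec_eq_roots_charpoly [DecidableEq V] (G : SimpleGraph V) :
    qSpec G = (qMat ℝ G).charpoly.roots := by
  unfold qSpec
  congr!

end SignlessLaplacian

section DominatingVertex

variable {W : Type*} [Fintype W] [DecidableEq W] {H : SimpleGraph W} {u : W}

/-- Unlike `qMat ℝ (delVert H u)`, the diagonal carries the degrees in `H`. -/
noncomputable def qMatDel (H : SimpleGraph W) (u : W) : Matrix {w // w ≠ u} {w // w ≠ u} ℝ :=
  (qMat ℝ H).submatrix Subtype.val Subtype.val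

theorem gdeg_eq_card_ne_of_forall_adj (hdom : ∀ w, w ≠ u → H.Adj u w) :
    gdeg H u = Fintype.card {w // w ≠ u} := by
  rw [gdeg, Fintype.card_subtype]
  congr 1
  ext w
  simpa using ⟨fun h => (H.ne_of_adj h).symm, hdom w⟩

theorem sum_qMatDel_eq (hdom : ∀ w, w ≠ u → H.Adj u w) {r : ℕ}
    (hreg : IsReg (delVert H u) r) (w : {w // w ≠ u}) :
    ∑ w', qMatDel H u w w' = 2 * r + 1 := by
  have hdel : ∑ w' : {w // w ≠ u}, adjMat ℝ H w w' = r := by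
    rw [← hreg w, gdeg_eq_sum_adjMat]
    rfl
  have hdeg : (gdeg H w : ℝ) = r + 1 := by
    rw [gdeg_eq_sum_adjMat, Fintype.sum_eq_add_sum_subtype_ne _ u, hdel]
    simp [adjMat, H.adj_symm (hdom w w.2), add_comm]
  calc ∑ w', qMatDel H u w w'
      = gdeg H w + ∑ w' : {w // w ≠ u}, adjMat ℝ H w w' := by
        simp [qMatDel, qMat, Finset.sum_add_distrib, diagonal_apply, Subtype.val_inj]
    _ = 2 * r + 1 := by rw [hdeg, hdel]; ring

theorem qMat_submatrix_sumCompl (hdom : ∀ w, w ≠ u → H.Adj u w) :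
    (qMat ℝ H).submatrix (Equiv.sumCompl (· = u)) (Equiv.sumCompl (· = u)) =
      fromBlocks (of fun _ _ => (Fintype.card {w // w ≠ u} : ℝ)) (of fun _ _ => 1)
        (of fun _ _ => 1) (qMatDel H u) := by
  ext (⟨x, hx⟩ | ⟨x, hx⟩) (⟨y, hy⟩ | ⟨y, hy⟩)
  · subst hx hy
    simp [qMat, adjMat, gdeg_eq_card_ne_of_forall_adj hdom]
  · subst hx
    simp [qMat, adjMat, Ne.symm hy, hdom y hy]
  · subst hy
    simp [qMat, adjMat, hx, H.adj_symm (hdom x hx)]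
  · rfl

theorem charpoly_qMat_mul_X_sub_C_of_forall_adj (hdom : ∀ w, w ≠ u → H.Adj u w) {c : ℝ}
    (hrow : ∀ w, ∑ w', qMatDel H u w w' = c) :
    (qMat ℝ H).charpoly * (X - C c) =
      ((X - C c) * (X - C (Fintype.card {w // w ≠ u} : ℝ)) - C (Fintype.card {w // w ≠ u} : ℝ)) *
        (qMatDel H u).charpoly := by
  have hcol : qMatDel H u * (of fun _ _ => 1 : Matrix {w // w ≠ u} {w // w = u} ℝ) =
      c • of fun _ _ => 1 := by
    ext w _
    simp [mul_apply, hrow w]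
  rw [← charpoly_reindex (Equiv.sumCompl (· = u)).symm, reindex_apply, Equiv.symm_symm,
    qMat_submatrix_sumCompl hdom]
  have hschur := charpoly_fromBlocks_mul_pow_card_of_mul_eq_smul
    (of fun _ _ => (Fintype.card {w // w ≠ u} : ℝ)) (of fun _ _ => 1) _ _ hcol
  rw [Fintype.card_subtype_eq, pow_one, det_unique] at hschur
  rw [hschur]
  simp [mul_apply, charmatrix_apply_eq]

end DominatingVertex

section Pocket

variable {V W : Type*} {F : SimpleGraph V} {H : SimpleGraph W} {u : W} {k : ℕ} (f : Fin k ↪ V)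

@[simp] theorem pocketGraph_adj_inl_inl (a b : V) :
    (pocketGraph F H u f).Adj (.inl a) (.inl b) ↔ F.Adj a b := Iff.rfl

@[simp] theorem pocketGraph_adj_inl_inr (a : V) (i : Fin k) (w : {w // w ≠ u}) :
    (pocketGraph F H u f).Adj (.inl a) (.inr (i, w)) ↔ a = f i ∧ H.Adj u w := Iff.rfl

@[simp] theorem pocketGraph_adj_inr_inl (a : V) (i : Fin k) (w : {w // w ≠ u}) :
    (pocketGraph F H u f).Adj (.inr (i, w)) (.inl a) ↔ a = f i ∧ H.Adj u w := Iff.rfl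

@[simp] theorem pocketGraph_adj_inr_inr (i j : Fin k) (w w' : {w // w ≠ u}) :
    (pocketGraph F H u f).Adj (.inr (i, w)) (.inr (j, w')) ↔ i = j ∧ H.Adj w w' := Iff.rfl

variable [Fintype V] [DecidableEq V] [Fintype W] [DecidableEq W]

noncomputable def pocketIncidence : Matrix V (Fin k) ℝ := of fun a i => if a = f i then 1 else 0

theorem gdeg_pocketGraph_inr (i : Fin k) (w : {w // w ≠ u}) :
    gdeg (pocketGraph F H u f) (.inr (i, w)) = gdeg H w := by
  rw [← Nat.cast_inj (R := ℝ), gdeg_eq_sum_adjMat, gdeg_eq_sum_adjMat, Fintype.sum_sum_type,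
    Fintype.sum_prod_type, Fintype.sum_eq_add_sum_subtype_ne _ u]
  simp [adjMat, H.adj_comm, ite_and]

theorem gdeg_pocketGraph_inl (hdom : ∀ w, w ≠ u → H.Adj u w) (a : V) :
    (gdeg (pocketGraph F H u f) (.inl a) : ℝ) =
      gdeg F a + Fintype.card {w // w ≠ u} * ∑ i, pocketIncidence f a i := by
  rw [gdeg_eq_sum_adjMat, gdeg_eq_sum_adjMat, Fintype.sum_sum_type, Fintype.sum_prod_type]
  simp [adjMat, pocketIncidence, fun w : {w // w ≠ u} => hdom w w.2, Finset.sum_ite, mul_comm]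

theorem qMat_pocketGraph (hdom : ∀ w, w ≠ u → H.Adj u w) :
    qMat ℝ (pocketGraph F H u f) =
      fromBlocks
        (qMat ℝ F + (Fintype.card {w // w ≠ u} : ℝ) • diagonal fun a => ∑ i, pocketIncidence f a i)
        (of fun a p => pocketIncidence f a p.1) (of fun a p => pocketIncidence f a p.1)ᵀ
        (1 ⊗ₖ qMatDel H u) := by
  ext (a | ⟨i, w⟩) (b | ⟨j, w'⟩)
  · by_cases h : a = b
    · subst h
      simp [qMat, adjMat, gdeg_pocketGraph_inl f hdom]
    · simp [qMat, adjMat, h]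
  · simp [qMat, adjMat, pocketIncidence, hdom w' w'.2]
  · simp [qMat, adjMat, pocketIncidence, hdom w w.2]
  · by_cases h : i = j
    · subst h
      by_cases h' : w = w'
      · subst h'
        simp [qMat, qMatDel, adjMat, gdeg_pocketGraph_inr]
      · simp [qMat, qMatDel, adjMat, h', Subtype.val_inj]
    · simp [qMat, qMatDel, adjMat, h]

/-- `Ψ(F, f, n, c)`: the factor of `χ(Q(G[F, V_k, H_u])) (X − c)^|V|` that depends on `H` only
through `n = |H − u|` and the common row sum `c` of `qMatDel H u`. -/
noncomputable def pocketFactor (F : SimpleGraph V) (f : Fin k ↪ V) (n c : ℝ) : ℝ[X] :=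
  ((X - C c) • (qMat ℝ F + n • diagonal fun a => ∑ i, pocketIncidence f a i).charmatrix -
    (n • (pocketIncidence f * (pocketIncidence f)ᵀ)).map C).det

theorem charpoly_qMat_pocketGraph_mul_pow (hdom : ∀ w, w ≠ u → H.Adj u w) {c : ℝ}
    (hrow : ∀ w, ∑ w', qMatDel H u w w' = c) :
    (qMat ℝ (pocketGraph F H u f)).charpoly * (X - C c) ^ Fintype.card V =
      pocketFactor F f (Fintype.card {w // w ≠ u}) c * (qMatDel H u).charpoly ^ k := by
  set E : Matrix V (Fin k × {w // w ≠ u}) ℝ := of fun a p => pocketIncidence f a p.1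
  have hcol : ((1 : Matrix (Fin k) (Fin k) ℝ) ⊗ₖ qMatDel H u) * Eᵀ = c • Eᵀ := by
    ext ⟨i, w⟩ a
    simp [E, mul_apply, Fintype.sum_prod_type, one_apply, ← Finset.sum_mul, hrow w]
  have hEE : E * Eᵀ =
      (Fintype.card {w // w ≠ u} : ℝ) • (pocketIncidence f * (pocketIncidence f)ᵀ) := by
    ext a b
    simp only [E, mul_apply, transpose_apply, of_apply, Fintype.sum_prod_type, Finset.sum_const,
      Finset.card_univ, nsmul_eq_mul, Matrix.smul_apply, smul_eq_mul, Finset.mul_sum]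
  rw [qMat_pocketGraph f hdom, charpoly_fromBlocks_mul_pow_card_of_mul_eq_smul _ _ _ _ hcol,
    charpoly_one_kronecker, Fintype.card_fin, hEE, pocketFactor]

end Pocket

theorem signlessLap_cospectral_pocketGraph_general
    {V W₁ W₂ : Type*} [Fintype V] [Fintype W₁] [DecidableEq W₁]
    [Fintype W₂] [DecidableEq W₂]
    (m k r₁ : ℕ) (hmu : Fintype.card W₁ = m) (hmv : Fintype.card W₂ = m)
    (F : SimpleGraph V) (Hu : SimpleGraph W₁) (Hv : SimpleGraph W₂) (u : W₁) (v : W₂)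
    (hdegu : ∀ w : W₁, w ≠ u → Hu.Adj u w) (hdegv : ∀ w : W₂, w ≠ v → Hv.Adj v w)
    (hregu : IsReg (delVert Hu u) r₁) (hregv : IsReg (delVert Hv v) r₁)
    (f : Fin k ↪ V)
    (hcos : qSpec Hu = qSpec Hv) :
    qSpec (pocketGraph F Hu u f) = qSpec (pocketGraph F Hv v f) := by
  have hrowu := sum_qMatDel_eq hdegu hregu
  have hrowv := sum_qMatDel_eq hdegv hregv
  have hcard : Fintype.card {w // w ≠ u} = Fintype.card {w // w ≠ v} := by
    simp [Fintype.card_subtype_compl, hmu, hmv]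
  have hQ : (qMat ℝ Hu).charpoly = (qMat ℝ Hv).charpoly := by
    rw [qSpec_eq_roots_charpoly, qSpec_eq_roots_charpoly] at hcos
    exact (qMat_isHermitian Hu).charpoly_eq_of_roots_eq_s6 (qMat_isHermitian Hv) hcos
  have hu := charpoly_qMat_mul_X_sub_C_of_forall_adj hdegu hrowu
  have hv := charpoly_qMat_mul_X_sub_C_of_forall_adj hdegv hrowv
  rw [hQ, hcard] at hu
  have hN : (qMatDel Hu u).charpoly = (qMatDel Hv v).charpoly :=
    mul_left_cancel₀ (left_ne_zero_of_mul (hv ▸ mul_ne_zero (charpoly_monic _).ne_zero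
      (X_sub_C_ne_zero _))) (hu.symm.trans hv)
  have hpocket :
      (qMat ℝ (pocketGraph F Hu u f)).charpoly = (qMat ℝ (pocketGraph F Hv v f)).charpoly := by
    refine mul_right_cancel₀ (pow_ne_zero (Fintype.card V) (X_sub_C_ne_zero (2 * r₁ + 1 : ℝ))) ?_
    rw [charpoly_qMat_pocketGraph_mul_pow f hdegu hrowu,
      charpoly_qMat_pocketGraph_mul_pow f hdegv hrowv, hcard, hN]
  rw [qSpec_eq_roots_charpoly, qSpec_eq_roots_charpoly, hpocket]

/-- Corollary 3.7. -/
theorem signlessLap_cospectral_pocketGraph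
    {V W₁ W₂ : Type*} [Fintype V] [DecidableEq V] [Fintype W₁] [DecidableEq W₁]
    [Fintype W₂] [DecidableEq W₂]
    (m k r₁ : ℕ) (hmu : Fintype.card W₁ = m) (hmv : Fintype.card W₂ = m)
    (hm2 : 2 ≤ m) (hr₁ : 1 ≤ r₁)
    (F : SimpleGraph V) (Hu : SimpleGraph W₁) (Hv : SimpleGraph W₂) (u : W₁) (v : W₂)
    (hdegu : ∀ w : W₁, w ≠ u → Hu.Adj u w) (hdegv : ∀ w : W₂, w ≠ v → Hv.Adj v w)
    (hregu : IsReg (delVert Hu u) r₁) (hregv : IsReg (delVert Hv v) r₁)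
    (f : Fin k ↪ V)
    (hcos : qSpec Hu = qSpec Hv) :
    qSpec (pocketGraph F Hu u f) = qSpec (pocketGraph F Hv v f) :=
  signlessLap_cospectral_pocketGraph_general m k r₁ hmu hmv F Hu Hv u v hdegu hdegv hregu hregv f
    hcos
end
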